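/- Let J : [0,∞) → (0,∞) be continuous and l(t) = ∫₀^t ds/J(s). If u : [0,∞) → ℝ is C¹ with u(0) = 0 and ∫₀^∞ u'(t)² J(t) dt < ∞, then (1/4)·∫₀^∞ u(t)²/(l(t)² J(t)) dt ≤ ∫₀^∞ u'(t)² J(t) dt. -/

import Mathlib

/-! Since `l' = 1 / J`, we have `(u² / l)' = 2 u u' / l - u² / (l² J)`. Bounding
`2 u u' / l ≤ ½ u² / (l² J) + 2 u'² J` and integrating over `[a, b] ⊆ (0, ∞)` gives
`½ ∫_a^b u² / (l² J) ≤ u(a)² / l(a) + 2 ∫_a^b u'² J`, the boundary term at `b` being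
nonnegative. Near `0`, `u(a) = O(a)` while `l(a) ~ a / J(0)`, so `u(a)² / l(a) → 0`; letting
`a → 0⁺` and `b = 1 / a → ∞` gives the inequality. -/

open MeasureTheory Set Filter Topology

theorem two_mul_mul_div_le {x y L K : ℝ} (hL : 0 < L) (hK : 0 < K) :
    2 * x * y / L ≤ 1 / 2 * (x ^ 2 / (L ^ 2 * K)) + 2 * (y ^ 2 * K) := by
  have h : 1 / 2 * (x ^ 2 / (L ^ 2 * K)) + 2 * (y ^ 2 * K) - 2 * x * y / L
      = (x - 2 * y * K * L) ^ 2 / (2 * L ^ 2 * K) := by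
    field_simp
    ring
  rw [← sub_nonneg, h]
  positivity

theorem hasDerivWithinAt_integral_Ici {E : Type*} [NormedAddCommGroup E] [NormedSpace ℝ E]
    [CompleteSpace E] {f : ℝ → E} {a t : ℝ} (hf : ContinuousOn f (Ici a)) (ht : a ≤ t) :
    HasDerivWithinAt (fun x => ∫ s in a..x, f s) (f t) (Ici a) t := by
  have hint : IntervalIntegrable f volume a t :=
    (hf.mono (by simpa [uIcc_of_le ht] using Icc_subset_Ici_self)).intervalIntegrable
  rcases ht.eq_or_lt with rfl | ht
  · exact intervalIntegral.integral_hasDerivWithinAt_right hint (t := Ioi a)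
      ((hf.mono Ioi_subset_Ici_self).stronglyMeasurableAtFilter_nhdsWithin measurableSet_Ioi a)
      ((hf a self_mem_Ici).mono Ioi_subset_Ici_self)
  · exact (intervalIntegral.integral_hasDerivAt_right hint
      ⟨Ici a, Ici_mem_nhds ht, hf.aestronglyMeasurable measurableSet_Ici⟩
      (hf.continuousAt (Ici_mem_nhds ht))).hasDerivWithinAt

theorem tendsto_setIntegral_Ioc_inv_nhdsGT_zero {E : Type*} [NormedAddCommGroup E]
    [NormedSpace ℝ E] {f : ℝ → E} (hf : IntegrableOn f (Ioi 0)) :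
    Tendsto (fun a => ∫ t in Ioc a a⁻¹, f t) (𝓝[>] 0) (𝓝 (∫ t in Ioi 0, f t)) := by
  have hcover : AECover (volume.restrict (Ioi 0)) (𝓝[>] (0 : ℝ)) fun a => Ioc a a⁻¹ :=
    (aecover_Ioi_of_Ioi (tendsto_id.mono_left nhdsWithin_le_nhds)).inter
      ((aecover_Iic tendsto_inv_nhdsGT_zero).mono Measure.restrict_le_self)
  refine (hcover.integral_tendsto_of_countably_generated hf).congr' ?_
  filter_upwards [self_mem_nhdsWithin] with a (ha : 0 < a)
  rw [Measure.restrict_restrict measurableSet_Ioc,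
    inter_eq_left.2 (Ioc_subset_Ioi_self.trans (Ioi_subset_Ioi ha.le))]

theorem tendsto_sq_div_nhdsGT_zero {u l : ℝ → ℝ} {d c : ℝ}
    (hu : HasDerivWithinAt u d (Ioi 0) 0) (hu0 : u 0 = 0)
    (hl : HasDerivWithinAt l c (Ioi 0) 0) (hl0 : l 0 = 0) (hc : c ≠ 0) :
    Tendsto (fun a => u a ^ 2 / l a) (𝓝[>] 0) (𝓝 0) := by
  have hu' := (hasDerivWithinAt_iff_tendsto_slope' (lt_irrefl 0)).1 hu
  have hl' := (hasDerivWithinAt_iff_tendsto_slope' (lt_irrefl 0)).1 hl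
  have h := ((hu'.pow 2).mul (tendsto_nhdsWithin_of_tendsto_nhds tendsto_id)).div hl' hc
  rw [mul_zero, zero_div] at h
  -- `u a ^ 2 / l a = (slope u 0 a) ^ 2 * a / slope l 0 a`, also when `l a = 0`
  refine h.congr' ?_
  filter_upwards [self_mem_nhdsWithin] with a (ha : 0 < a)
  simp only [Pi.div_apply, id, slope_def_field, hu0, hl0, sub_zero]
  rcases eq_or_ne (l a) 0 with hla | hla
  · simp [hla]
  · field_simp

theorem hardy_intervalIntegral_le {u u' l J : ℝ → ℝ} {a b : ℝ} (hab : a ≤ b)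
    (hu : ∀ t ∈ Icc a b, HasDerivAt u (u' t) t) (hu' : ContinuousOn u' (Icc a b))
    (hl : ∀ t ∈ Icc a b, HasDerivAt l (1 / J t) t) (hl_pos : ∀ t ∈ Icc a b, 0 < l t)
    (hJ : ContinuousOn J (Icc a b)) (hJ_pos : ∀ t ∈ Icc a b, 0 < J t) :
    1 / 2 * ∫ t in a..b, u t ^ 2 / (l t ^ 2 * J t) ≤
      u a ^ 2 / l a + 2 * ∫ t in a..b, u' t ^ 2 * J t := by
  have hu_cont : ContinuousOn u (Icc a b) := fun t ht =>
    (hu t ht).continuousAt.continuousWithinAt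
  have hl_cont : ContinuousOn l (Icc a b) := fun t ht =>
    (hl t ht).continuousAt.continuousWithinAt
  have hl_ne : ∀ t ∈ Icc a b, l t ≠ 0 := fun t ht => (hl_pos t ht).ne'
  have hJ_ne : ∀ t ∈ Icc a b, J t ≠ 0 := fun t ht => (hJ_pos t ht).ne'
  have hint {f : ℝ → ℝ} (hf : ContinuousOn f (Icc a b)) : IntervalIntegrable f volume a b :=
    (uIcc_of_le hab ▸ hf).intervalIntegrable
  have hg : IntervalIntegrable (fun t => 2 * u t * u' t / l t) volume a b :=
    hint (((continuousOn_const.mul hu_cont).mul hu').div hl_cont hl_ne)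
  have hh : IntervalIntegrable (fun t => u t ^ 2 / (l t ^ 2 * J t)) volume a b :=
    hint ((hu_cont.pow 2).div ((hl_cont.pow 2).mul hJ) fun t ht =>
      mul_ne_zero (pow_ne_zero 2 (hl_ne t ht)) (hJ_ne t ht))
  have hk : IntervalIntegrable (fun t => u' t ^ 2 * J t) volume a b :=
    hint ((hu'.pow 2).mul hJ)
  have hderiv : ∀ t ∈ uIcc a b, HasDerivAt (fun s => u s ^ 2 / l s)
      (2 * u t * u' t / l t - u t ^ 2 / (l t ^ 2 * J t)) t := by
    intro t ht
    rw [uIcc_of_le hab] at ht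
    refine (((hu t ht).fun_pow 2).div (hl t ht) (hl_ne t ht)).congr_deriv ?_
    field_simp [hl_ne t ht, hJ_ne t ht]
    ring
  have hftc := intervalIntegral.integral_eq_sub_of_hasDerivAt hderiv (hg.sub hh)
  have hyoung := intervalIntegral.integral_mono_on hab hg
    ((hh.const_mul (1 / 2)).add (hk.const_mul 2)) fun t ht =>
      two_mul_mul_div_le (hl_pos t ht) (hJ_pos t ht)
  rw [intervalIntegral.integral_sub hg hh] at hftc
  rw [intervalIntegral.integral_add (hh.const_mul _) (hk.const_mul _),
    intervalIntegral.integral_const_mul, intervalIntegral.integral_const_mul] at hyoung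
  have hb : 0 ≤ u b ^ 2 / l b := div_nonneg (sq_nonneg _) (hl_pos b ⟨hab, le_rfl⟩).le
  linarith

theorem hardy_inequality_of_tendsto {u u' l J : ℝ → ℝ}
    (hu : ∀ t ∈ Ioi 0, HasDerivAt u (u' t) t) (hu' : ContinuousOn u' (Ioi 0))
    (hl : ∀ t ∈ Ioi 0, HasDerivAt l (1 / J t) t) (hl_pos : ∀ t ∈ Ioi 0, 0 < l t)
    (hJ : ContinuousOn J (Ioi 0)) (hJ_pos : ∀ t ∈ Ioi 0, 0 < J t)
    (hboundary : Tendsto (fun a => u a ^ 2 / l a) (𝓝[>] 0) (𝓝 0))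
    (hE : IntegrableOn (fun t => u' t ^ 2 * J t) (Ioi 0)) :
    1 / 4 * ∫ t in Ioi 0, u t ^ 2 / (l t ^ 2 * J t) ≤ ∫ t in Ioi 0, u' t ^ 2 * J t := by
  have hE_nonneg : ∀ t ∈ Ioi (0:ℝ), 0 ≤ u' t ^ 2 * J t := fun t ht =>
    mul_nonneg (sq_nonneg _) (hJ_pos t ht).le
  by_cases hA : IntegrableOn (fun t => u t ^ 2 / (l t ^ 2 * J t)) (Ioi 0)
  swap
  · simpa [integral_undef hA] using setIntegral_nonneg measurableSet_Ioi hE_nonneg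
  have hlocal : ∀ᶠ a in 𝓝[>] 0, 1 / 2 * ∫ t in Ioc a a⁻¹, u t ^ 2 / (l t ^ 2 * J t) ≤
      u a ^ 2 / l a + 2 * ∫ t in Ioi 0, u' t ^ 2 * J t := by
    filter_upwards [Ioo_mem_nhdsGT one_pos] with a ⟨ha0, ha1⟩
    have hab : a ≤ a⁻¹ := ha1.le.trans ((one_le_inv₀ ha0).2 ha1.le)
    have hsub : Icc a a⁻¹ ⊆ Ioi 0 := fun t ht => ha0.trans_le ht.1
    have h := hardy_intervalIntegral_le hab (fun t ht => hu t (hsub ht)) (hu'.mono hsub)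
      (fun t ht => hl t (hsub ht)) (fun t ht => hl_pos t (hsub ht)) (hJ.mono hsub)
      (fun t ht => hJ_pos t (hsub ht))
    have hE_le : ∫ t in Ioc a a⁻¹, u' t ^ 2 * J t ≤ ∫ t in Ioi 0, u' t ^ 2 * J t :=
      setIntegral_mono_set hE (ae_restrict_of_forall_mem measurableSet_Ioi hE_nonneg)
        (Ioc_subset_Ioi_self.trans (Ioi_subset_Ioi ha0.le)).eventuallyLE
    rw [intervalIntegral.integral_of_le hab, intervalIntegral.integral_of_le hab] at h
    linarith
  have hlim := le_of_tendsto_of_tendsto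
    ((tendsto_setIntegral_Ioc_inv_nhdsGT_zero hA).const_mul (1 / 2))
    (hboundary.add_const (2 * ∫ t in Ioi 0, u' t ^ 2 * J t)) hlocal
  linarith

theorem stmt_3 (J : ℝ → ℝ)
    (hJcont : ContinuousOn J (Ici 0))
    (hJpos : ∀ t ∈ Ici (0:ℝ), 0 < J t)
    (l : ℝ → ℝ) (hl : ∀ t, l t = ∫ s in (0:ℝ)..t, 1 / J s)
    (u : ℝ → ℝ) (hu : ContDiff ℝ 1 u) (hu0 : u 0 = 0)
    (hfin : IntegrableOn (fun t => deriv u t ^ 2 * J t) (Ioi 0)) :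
    (1/4) * ∫ t in Ioi (0:ℝ), u t ^ 2 / (l t ^ 2 * J t) ≤
      ∫ t in Ioi (0:ℝ), deriv u t ^ 2 * J t := by
  have hinv : ContinuousOn (fun s => 1 / J s) (Ici 0) :=
    continuousOn_const.div hJcont fun t ht => (hJpos t ht).ne'
  have hl_deriv : ∀ t ∈ Ici 0, HasDerivWithinAt l (1 / J t) (Ici 0) t :=
    fun t ht => funext hl ▸ hasDerivWithinAt_integral_Ici hinv ht
  have hl_pos : ∀ t ∈ Ioi 0, 0 < l t := fun t (ht : 0 < t) => hl t ▸
    intervalIntegral.intervalIntegral_pos_of_pos_on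
      (hinv.mono (uIcc_of_le ht.le ▸ Icc_subset_Ici_self)).intervalIntegrable
      (fun s hs => one_div_pos.2 (hJpos s (Ioi_subset_Ici_self hs.1))) ht
  have hu_deriv : ∀ t, HasDerivAt u (deriv u t) t := fun t =>
    (hu.differentiable one_ne_zero t).hasDerivAt
  have hboundary : Tendsto (fun a => u a ^ 2 / l a) (𝓝[>] 0) (𝓝 0) :=
    tendsto_sq_div_nhdsGT_zero (hu_deriv 0).hasDerivWithinAt hu0
      ((hl_deriv 0 self_mem_Ici).mono Ioi_subset_Ici_self) (by simp [hl])
      (one_div_pos.2 (hJpos 0 self_mem_Ici)).ne'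
  exact hardy_inequality_of_tendsto (fun t _ => hu_deriv t)
    (hu.continuous_deriv le_rfl).continuousOn
    (fun t ht => (hl_deriv t (Ioi_subset_Ici_self ht)).hasDerivAt (Ici_mem_nhds ht)) hl_pos
    (hJcont.mono Ioi_subset_Ici_self) (fun t ht => hJpos t (Ioi_subset_Ici_self ht)) hboundary hfin
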